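/- arXiv:1309.4153 — 2 statements merged into one kernel-verified Lean document; each statement's English description precedes it below -/
import Mathlib

section
/- With $m^{(n)}$, $\bm g$, $\bm M$, $h_{\ell 0}^{(n)}$ as in the linear-fractional iteration (and $h_{\ell 0}^{(0)} = 0$ for all $\ell$), one has $\prod_{n'=1}^n \frac{1}{1 + m - m\sum_{\ell'=1}^k g_{\ell'} h_{\ell' 0}^{(n'-1)}} = \frac{1}{1 + m^{(n)}}$. -/
/-! Write `aⱼ = g Mʲ 1ᵗ`, so that `m⁽ʲ⁺¹⁾ = m⁽ʲ⁾ + m aⱼ`. Since `g⁽ʲ⁾` sums to `1`, the rank-one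
correction in `H⁽ʲ⁾` only rescales `Mʲ 1ᵗ`, giving `g H⁽ʲ⁾ 1ᵗ = aⱼ / (1 + m⁽ʲ⁾)`. Hence the `j`-th
denominator equals `(1 + m⁽ʲ⁺¹⁾) / (1 + m⁽ʲ⁾)` and the product telescopes. -/

open Matrix Finset

theorem Finset.prod_Icc_one_sub_one_eq_prod_range {M : Type*} [CommMonoid M] (f : ℕ → M)
    (n : ℕ) : ∏ i ∈ Icc 1 n, f (i - 1) = ∏ i ∈ range n, f i := by
  induction n with
  | zero => simp
  | succ n ih => rw [prod_Icc_succ_top (by omega), ih, prod_range_succ, Nat.add_sub_cancel]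

theorem Finset.prod_range_div_succ_of_ne_zero {G : Type*} [CommGroupWithZero G] (f : ℕ → G)
    (hf : ∀ i, f i ≠ 0) (n : ℕ) : ∏ i ∈ range n, f i / f (i + 1) = f 0 / f n := by
  induction n with
  | zero => simp [hf 0]
  | succ n ih => rw [prod_range_succ, ih, div_mul_div_cancel₀ (hf n)]

theorem Matrix.sub_smul_mul_vecMulVec_one_mulVec_one {n R : Type*} [Fintype n] [CommRing R]
    (P : Matrix n n R) (c : R) (u : n → R) :
    (P - c • (P * vecMulVec 1 u)) *ᵥ 1 = (1 - c * ∑ i, u i) • P *ᵥ 1 := by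
  rw [sub_mulVec, smul_mulVec, ← mulVec_mulVec, vecMulVec_mulVec, dotProduct_one]
  simp only [op_smul_eq_smul, mulVec_smul, smul_smul, sub_smul, one_smul]

section LinearFractional

variable {k : ℕ} {M : Matrix (Fin k) (Fin k) ℝ} {g : Fin k → ℝ} {m : ℝ} {mN : ℕ → ℝ}
  {gN : ℕ → Fin k → ℝ} {HN : ℕ → Matrix (Fin k) (Fin k) ℝ} {h0 : ℕ → Fin k → ℝ}

theorem mN_eq_sum (hmN : ∀ j, mN j = m * (g ⬝ᵥ (∑ i ∈ range j, M ^ i) *ᵥ 1)) (j : ℕ) :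
    mN j = m * ∑ i ∈ range j, g ⬝ᵥ M ^ i *ᵥ 1 := by
  rw [hmN, sum_mulVec, dotProduct_sum]

theorem mN_succ (hmN : ∀ j, mN j = m * (g ⬝ᵥ (∑ i ∈ range j, M ^ i) *ᵥ 1)) (j : ℕ) :
    mN (j + 1) = mN j + m * (g ⬝ᵥ M ^ j *ᵥ 1) := by
  rw [mN_eq_sum hmN, mN_eq_sum hmN, sum_range_succ, mul_add]

theorem one_add_mN_pos (hmN : ∀ j, mN j = m * (g ⬝ᵥ (∑ i ∈ range j, M ^ i) *ᵥ 1))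
    (hmNpos : ∀ j, 1 ≤ j → 0 < mN j) (j : ℕ) : 0 < 1 + mN j := by
  rcases j with _ | j
  · simp [mN_eq_sum hmN]
  · linarith [hmNpos (j + 1) (by omega)]

theorem sum_gN_eq_one (hmN : ∀ j, mN j = m * (g ⬝ᵥ (∑ i ∈ range j, M ^ i) *ᵥ 1))
    (hgN : ∀ j, 1 ≤ j → gN j = (m / mN j) • g ᵥ* (∑ i ∈ range j, M ^ i))
    {j : ℕ} (hj : 1 ≤ j) (hmNj : mN j ≠ 0) : ∑ l, gN j l = 1 := by
  rw [← dotProduct_one, hgN j hj, smul_dotProduct, ← dotProduct_mulVec, smul_eq_mul,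
    div_mul_eq_mul_div, ← hmN, div_self hmNj]

theorem dotProduct_HN_mulVec_one
    (hmN : ∀ j, mN j = m * (g ⬝ᵥ (∑ i ∈ range j, M ^ i) *ᵥ 1)) (hmNpos : ∀ j, 1 ≤ j → 0 < mN j)
    (hgN : ∀ j, 1 ≤ j → gN j = (m / mN j) • g ᵥ* (∑ i ∈ range j, M ^ i))
    (hHN : ∀ j, 1 ≤ j → HN j = M ^ j - (mN j / (1 + mN j)) • (M ^ j * vecMulVec 1 (gN j)))
    {j : ℕ} (hj : 1 ≤ j) : g ⬝ᵥ HN j *ᵥ 1 = (g ⬝ᵥ M ^ j *ᵥ 1) / (1 + mN j) := by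
  have hpos := one_add_mN_pos hmN hmNpos j
  rw [hHN j hj, sub_smul_mul_vecMulVec_one_mulVec_one,
    sum_gN_eq_one hmN hgN hj (hmNpos j hj).ne', dotProduct_smul, smul_eq_mul]
  field_simp
  ring

/-- The paper's identity `1 + m - m ∑ g h⁽ⁿ⁻¹⁾ = (1 + m⁽ⁿ⁾) / (1 + m⁽ⁿ⁻¹⁾)`, with `j = n - 1`. -/
theorem one_add_sub_mul_sum_h0_eq_div (hg : ∑ i, g i = 1)
    (hmN : ∀ j, mN j = m * (g ⬝ᵥ (∑ i ∈ range j, M ^ i) *ᵥ 1))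
    (hmNpos : ∀ j, 1 ≤ j → 0 < mN j)
    (hgN : ∀ j, 1 ≤ j → gN j = (m / mN j) • g ᵥ* (∑ i ∈ range j, M ^ i))
    (hHN : ∀ j, 1 ≤ j → HN j = M ^ j - (mN j / (1 + mN j)) • (M ^ j * vecMulVec 1 (gN j)))
    (hh0zero : ∀ l, h0 0 l = 0) (hh0 : ∀ j, 1 ≤ j → ∀ l, h0 j l = 1 - (HN j *ᵥ 1) l)
    (j : ℕ) : 1 + m - m * ∑ l, g l * h0 j l = (1 + mN (j + 1)) / (1 + mN j) := by
  have hpos := one_add_mN_pos hmN hmNpos j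
  rw [mN_succ hmN, eq_div_iff hpos.ne']
  rcases j with _ | j
  · simp [hh0zero, mN_eq_sum hmN, dotProduct_one, hg]
  · have hsum : ∑ l, g l * h0 (j + 1) l = 1 - g ⬝ᵥ HN (j + 1) *ᵥ 1 := by
      simp only [hh0 (j + 1) (by omega), mul_sub, mul_one, sum_sub_distrib, hg, dotProduct]
    rw [hsum, dotProduct_HN_mulVec_one hmN hmNpos hgN hHN (by omega)]
    field_simp
    ring

end LinearFractional

open Matrix in
theorem stmt_7_general (k : ℕ) (M : Matrix (Fin k) (Fin k) ℝ) (g : Fin k → ℝ) (m : ℝ)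
    (hg : ∑ i, g i = 1)
    (mN : ℕ → ℝ) (gN : ℕ → Fin k → ℝ) (HN : ℕ → Matrix (Fin k) (Fin k) ℝ)
    (h0 : ℕ → Fin k → ℝ)
    (hmN : ∀ j, mN j = m * (g ⬝ᵥ (∑ i ∈ Finset.range j, M ^ i).mulVec (fun _ => 1)))
    (hmNpos : ∀ j, 1 ≤ j → 0 < mN j)
    (hgN : ∀ j, 1 ≤ j →
      gN j = (m / mN j) • Matrix.vecMul g (∑ i ∈ Finset.range j, M ^ i))
    (hHN : ∀ j, 1 ≤ j →
      HN j = M ^ j - (mN j / (1 + mN j)) • (M ^ j * Matrix.vecMulVec (fun _ => 1) (gN j)))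
    (hh0zero : ∀ l, h0 0 l = 0)
    (hh0 : ∀ j, 1 ≤ j → ∀ l, h0 j l = 1 - (HN j).mulVec (fun _ => 1) l) :
    ∀ n : ℕ, ∏ n' ∈ Finset.Icc 1 n, (1 / (1 + m - m * ∑ l, g l * h0 (n' - 1) l)) =
      1 / (1 + mN n) := by
  intro n
  have hpos := one_add_mN_pos hmN hmNpos
  have hstep := one_add_sub_mul_sum_h0_eq_div hg hmN hmNpos hgN hHN hh0zero hh0
  rw [prod_Icc_one_sub_one_eq_prod_range (fun j => 1 / (1 + m - m * ∑ l, g l * h0 j l))]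
  simp only [hstep, one_div_div]
  rw [prod_range_div_succ_of_ne_zero _ (fun j => (hpos j).ne'), mN_eq_sum hmN 0, sum_range_zero,
    mul_zero, add_zero]

open Matrix in
theorem stmt_7 (k : ℕ) (M : Matrix (Fin k) (Fin k) ℝ) (g : Fin k → ℝ) (m : ℝ)
    (hm : 0 < m) (hgnn : ∀ i, 0 ≤ g i) (hg : ∑ i, g i = 1)
    (mN : ℕ → ℝ) (gN : ℕ → Fin k → ℝ) (HN : ℕ → Matrix (Fin k) (Fin k) ℝ)
    (h0 : ℕ → Fin k → ℝ)
    (hmN : ∀ j, mN j = m * (g ⬝ᵥ (∑ i ∈ Finset.range j, M ^ i).mulVec (fun _ => 1)))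
    (hmNpos : ∀ j, 1 ≤ j → 0 < mN j)
    (hgN : ∀ j, 1 ≤ j →
      gN j = (m / mN j) • Matrix.vecMul g (∑ i ∈ Finset.range j, M ^ i))
    (hHN : ∀ j, 1 ≤ j →
      HN j = M ^ j - (mN j / (1 + mN j)) • (M ^ j * Matrix.vecMulVec (fun _ => 1) (gN j)))
    (hh0zero : ∀ l, h0 0 l = 0)
    (hh0 : ∀ j, 1 ≤ j → ∀ l, h0 j l = 1 - (HN j).mulVec (fun _ => 1) l) :
    ∀ n : ℕ, ∏ n' ∈ Finset.Icc 1 n, (1 / (1 + m - m * ∑ l, g l * h0 (n' - 1) l)) =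
      1 / (1 + mN n) :=
  stmt_7_general k M g m hg mN gN HN h0 hmN hmNpos hgN hHN hh0zero hh0
end

section
/- Fix $k$, a substochastic matrix $\bm H$ with rows $\bm h_a$, a probability vector $\bm g$ and $m>0$, defining $f_a(\bm s) = h_{a0} + \frac{\sum_{\ell'} h_{a\ell'} s_{\ell'}}{1+m-m\sum_{\ell'} g_{\ell'} s_{\ell'}}$. For a vector $\bm q = (q_1,\dots,q_k) \in [0,1)^k$ (interpreted as extinction probabilities $q_\ell = 1 - p_\ell$), set $U = 1 + m - m\sum_{\ell'} g_{\ell'} q_{\ell'}$, $V_a = \sum_{\ell'} h_{a\ell'} q_{\ell'}$, and $p'_a = 1 - f_a(\bm q)$. Then $\frac{1}{p'_a} \sum_{b=1}^k (1 - q_b) \frac{\partial f_a}{\partial s_b}(\bm q) = \frac{1}{U}$; in particular this quantity is independent of $a$. -/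
/-!
Along coordinate `b`, the numerator `∑ h s` and denominator `1 + m - m ∑ g s` of `f_a` are affine,
so `∂_b f_a(q) = (h_b U + m g_b V) / U²`. Summing against `1 - q_b` and using `∑ g = 1`, the
`m`-terms collapse through `m (1 - ∑ g q) = U - 1`, leaving `(U ∑ h - V) / U²`; this is `p'_a / U`,
since `p'_a = ∑ h - V / U`.
-/

open Finset

section

variable {ι : Type*} [Fintype ι]

theorem hasDerivAt_sum_mul_update [DecidableEq ι] (w q : ι → ℝ) (b : ι) (t : ℝ) :
    HasDerivAt (fun t => ∑ c, w c * Function.update q b t c) (w b) t := by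
  have h := HasDerivAt.fun_sum (u := univ) fun c _ =>
    (hasDerivAt_pi.1 (hasDerivAt_update q b t) c).const_mul (w c)
  simpa [Pi.single_apply] using h

theorem hasDerivAt_linearFractional_update [DecidableEq ι] (c m : ℝ) (h g q : ι → ℝ) (b : ι)
    {U V : ℝ}
    (hU : U = 1 + m - m * ∑ i, g i * q i) (hUne : U ≠ 0) (hV : V = ∑ i, h i * q i) :
    HasDerivAt
      (fun t => c + (∑ i, h i * Function.update q b t i) /
        (1 + m - m * ∑ i, g i * Function.update q b t i))
      ((h b * U + m * g b * V) / U ^ 2) (q b) := by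
  have hnum := hasDerivAt_sum_mul_update h q b (q b)
  have hden := ((hasDerivAt_sum_mul_update g q b (q b)).const_mul m).const_sub (1 + m)
  have hden_ne : 1 + m - m * ∑ i, g i * Function.update q b (q b) i ≠ 0 := by
    rwa [Function.update_eq_self, ← hU]
  refine ((hnum.fun_div hden hden_ne).const_add c).congr_deriv ?_
  simp only [Function.update_eq_self, ← hU, ← hV]
  ring

theorem sum_one_sub_mul_partial_linearFractional (h g q : ι → ℝ) (m : ℝ) {U V : ℝ}
    (hgsum : ∑ i, g i = 1) (hU : U = 1 + m - m * ∑ i, g i * q i) (hV : V = ∑ i, h i * q i) :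
    ∑ b, (1 - q b) * ((h b * U + m * g b * V) / U ^ 2) = (U * ∑ i, h i - V) / U ^ 2 := by
  simp only [mul_div_assoc', ← sum_div]
  congr 1
  calc ∑ b, (1 - q b) * (h b * U + m * g b * V)
      = U * (∑ b, h b - ∑ b, h b * q b) + m * V * (∑ b, g b - ∑ b, g b * q b) := by
        simp only [mul_sub, mul_sum, ← sum_sub_distrib, ← sum_add_distrib]
        exact sum_congr rfl fun b _ => by ring
    _ = U * ∑ i, h i - V := by
        rw [hgsum, ← hV]
        linear_combination (-V) * hU

end

theorem stmt_8_general (k : ℕ) (H : Fin k → Fin k → ℝ) (g : Fin k → ℝ) (m : ℝ)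
    (hgsum : ∑ b, g b = 1)
    (q : Fin k → ℝ)
    (f : Fin k → (Fin k → ℝ) → ℝ)
    (hf : ∀ a s, f a s = (1 - ∑ b, H a b) +
      (∑ b, H a b * s b) / (1 + m - m * ∑ b, g b * s b))
    (U : ℝ) (hU : U = 1 + m - m * ∑ b, g b * q b) (hUpos : 0 < U)
    (p' : Fin k → ℝ) (hp' : ∀ a, p' a = 1 - f a q) (hp'pos : ∀ a, 0 < p' a) :
    ∀ a, (1 / p' a) * ∑ b, (1 - q b) *
        deriv (fun t => f a (Function.update q b t)) (q b) = 1 / U := by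
  intro a
  set V := ∑ b, H a b * q b with hV
  have hp'a : p' a = (U * ∑ b, H a b - V) / U := by
    rw [hp', hf, ← hU, ← hV]
    field_simp
    ring
  have hderiv : ∀ b, deriv (fun t => f a (Function.update q b t)) (q b) =
      (H a b * U + m * g b * V) / U ^ 2 := fun b => by
    simp only [hf]
    exact (hasDerivAt_linearFractional_update _ m _ g q b hU hUpos.ne' hV).deriv
  have hne : U * ∑ b, H a b - V ≠ 0 := fun h0 => (hp'pos a).ne' (by rw [hp'a, h0, zero_div])
  simp only [hderiv]
  rw [sum_one_sub_mul_partial_linearFractional _ g q m hgsum hU hV, hp'a]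
  field_simp

theorem stmt_8 (k : ℕ) (H : Fin k → Fin k → ℝ) (g : Fin k → ℝ) (m : ℝ)
    (hH : ∀ a b, 0 ≤ H a b) (hHrow : ∀ a, ∑ b, H a b ≤ 1)
    (hg : ∀ b, 0 ≤ g b) (hgsum : ∑ b, g b = 1) (hm : 0 < m)
    (q : Fin k → ℝ) (hq : ∀ b, q b ∈ Set.Ico (0:ℝ) 1)
    (f : Fin k → (Fin k → ℝ) → ℝ)
    (hf : ∀ a s, f a s = (1 - ∑ b, H a b) +
      (∑ b, H a b * s b) / (1 + m - m * ∑ b, g b * s b))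
    (U : ℝ) (hU : U = 1 + m - m * ∑ b, g b * q b) (hUpos : 0 < U)
    (p' : Fin k → ℝ) (hp' : ∀ a, p' a = 1 - f a q) (hp'pos : ∀ a, 0 < p' a) :
    ∀ a, (1 / p' a) * ∑ b, (1 - q b) *
        deriv (fun t => f a (Function.update q b t)) (q b) = 1 / U :=
  stmt_8_general k H g m hgsum q f hf U hU hUpos p' hp' hp'pos
end
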